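/- Let E be a Dedekind complete vector lattice, let (T_α) be a decreasing net of positive orthomorphisms of E, and let S be a nonempty subset of E. If T_α s order-converges to 0 in E for every s ∈ S, then T_α x order-converges to 0 in E for every x in the band B_S generated by S. -/

import Mathlib

variable (E : Type*) [AddCommGroup E] [ConditionallyCompleteLattice E] [Module ℝ E]
  [CovariantClass E E (· + ·) (· ≤ ·)] [PosSMulMono ℝ E]

/-- The order on order bounded operators: `A ≤ B` iff `A x ≤ B x` for all `x ≥ 0`. -/
def opLE (A B : E →ₗ[ℝ] E) : Prop := ∀ x : E, 0 ≤ x → A x ≤ B x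

/-- An operator is order bounded when it maps order bounded sets to order bounded sets. -/
def IsOrderBoundedOp (T : E →ₗ[ℝ] E) : Prop :=
  ∀ a b : E, ∃ c d : E, ∀ x : E, a ≤ x → x ≤ b → c ≤ T x ∧ T x ≤ d

/-- Band preserving: `T x` lies in the band generated by `x`; equivalently `T x ⊥ y`
whenever `x ⊥ y`. -/
def IsBandPreserving (T : E →ₗ[ℝ] E) : Prop :=
  ∀ x y : E, |x| ⊓ |y| = 0 → |T x| ⊓ |y| = 0

/-- An orthomorphism is an order bounded band preserving linear operator. -/
def IsOrthomorphism (T : E →ₗ[ℝ] E) : Prop :=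
  IsOrderBoundedOp E T ∧ IsBandPreserving E T

/-- Membership in the band generated by a set `S` (in an Archimedean vector lattice this is
the double disjoint complement of `S`). -/
def memBandGen (S : Set E) (w : E) : Prop :=
  ∀ u : E, (∀ s ∈ S, |u| ⊓ |s| = 0) → |u| ⊓ |w| = 0

/-- `P` is the band projection onto the band `B`: it maps into `B` and `x - P x` is
disjoint from `B` for every `x`. -/
def IsBandProjectionOnto (B : Set E) (P : E →ₗ[ℝ] E) : Prop :=
  (∀ x : E, P x ∈ B) ∧ (∀ x : E, ∀ b ∈ B, |x - P x| ⊓ |b| = 0)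

/-- Order convergence of a net: there is a downward directed set `D` with infimum `0`
such that the net is eventually dominated by every member of `D`. -/
def OrderConvNet {ι : Type*} [Preorder ι] (y : ι → E) (l : E) : Prop :=
  ∃ D : Set E, D.Nonempty ∧ DirectedOn (· ≥ ·) D ∧ IsGLB D 0 ∧
    ∀ d ∈ D, ∃ i₀ : ι, ∀ i : ι, i₀ ≤ i → |y i - l| ≤ d

/-- Unbounded order convergence of a net. -/
def UOConvNet {ι : Type*} [Preorder ι] (y : ι → E) (l : E) : Prop :=
  ∀ u : E, 0 ≤ u → OrderConvNet E (fun i => |y i - l| ⊓ u) 0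

/-- Order convergence of a net of operators, in the operator order of the order bounded
operators: there is a downward directed set `D` of operators whose infimum among the
order bounded operators is `0`, eventually dominating `|T i - L|`. -/
def OpOrderConvNet {ι : Type*} [Preorder ι] (T : ι → E →ₗ[ℝ] E) (L : E →ₗ[ℝ] E) : Prop :=
  ∃ D : Set (E →ₗ[ℝ] E), D.Nonempty ∧
    DirectedOn (fun A B => opLE E B A) D ∧
    (∀ d ∈ D, opLE E 0 d) ∧
    (∀ C : E →ₗ[ℝ] E, IsOrderBoundedOp E C → (∀ d ∈ D, opLE E C d) → opLE E C 0) ∧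
    ∀ d ∈ D, ∃ i₀ : ι, ∀ i : ι, i₀ ≤ i → opLE E (L - T i) d ∧ opLE E (T i - L) d

/-!
Since `|T i x| ≤ T i |x|` and `T i |x|` decreases, it suffices that every lower bound `b ≥ 0` of
`T i |x|` vanishes. Such a `b` is disjoint from each `s ∈ S`: from
`T i |x| ≤ n • T i |s| + T i (|x| - n • |s|)⁺` and `T i |s| = |T i s| → 0` one gets
`b ≤ T j (|x| - n • |s|)⁺` for all `n`, hence, a positive orthomorphism being order continuous,
`b ≤ T j z` with `z = ⨅ n, (|x| - n • |s|)⁺`, and `z ⊥ s` by the Archimedean property. So `b` is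
disjoint from `S`, hence from `x` and from `T j |x| ≥ b`, and `b = 0`.
-/

section LatticeOrderedGroup

variable {V : Type*} [Lattice V] [AddCommGroup V] [AddLeftMono V]

theorem le_of_le_add_of_inf_nonpos {a b w : V} (hd : b ⊓ a ≤ 0) (hw : 0 ≤ w) (h : b ≤ a + w) :
    b ≤ w :=
  sub_nonpos.mp <| (le_inf (sub_le_self b hw) (sub_le_iff_le_add.mpr h)).trans hd

theorem inf_add_posPart_sub (a c : V) : a ⊓ c + (a - c)⁺ = a := by
  rw [inf_eq_sub_posPart_sub, sub_add_cancel]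

end LatticeOrderedGroup

theorem IsGLB.nonpos_of_forall_le_smul {V : Type*} [AddCommGroup V] [PartialOrder V] [Module ℝ V]
    [PosSMulMono ℝ V] {A : Set V} (hA : IsGLB A 0) (hAne : A.Nonempty) {r : ℝ} (hr : 0 ≤ r)
    {m : V} (h : ∀ a ∈ A, m ≤ r • a) : m ≤ 0 := by
  rcases hr.eq_or_lt with rfl | hr
  · obtain ⟨a, ha⟩ := hAne
    simpa using h a ha
  have : r⁻¹ • m ≤ 0 := hA.2 fun a ha => (inv_smul_le_iff_of_pos hr).mpr (h a ha)
  simpa [hr.ne'] using smul_nonpos_of_nonneg_of_nonpos hr.le this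

section ConditionallyCompleteLatticeOrderedGroup

variable {V : Type*} [ConditionallyCompleteLattice V] [AddCommGroup V] [AddLeftMono V]

/-- Archimedean property: `w ≤ (⨆ n, n • w) - w` forces `w ≤ 0`. -/
theorem nonpos_of_forall_nsmul_le {w u : V} (h : ∀ n : ℕ, n • w ≤ u) : w ≤ 0 := by
  have hbdd : BddAbove (Set.range fun n : ℕ => n • w) := ⟨u, Set.forall_mem_range.2 h⟩
  have hsup : ⨆ n : ℕ, n • w ≤ (⨆ n : ℕ, n • w) - w := ciSup_le fun n =>
    le_sub_iff_add_le.mpr <| by simpa only [succ_nsmul] using le_ciSup hbdd (n + 1)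
  exact (le_sub_self_iff _).mp hsup

variable [Module ℝ V] [PosSMulMono ℝ V]

theorem inf_nonpos_of_forall_le_posPart_sub_smul {v s z : V} (hv : 0 ≤ v)
    (hz : ∀ n : ℕ, z ≤ (v - (n : ℝ) • s)⁺) : z ⊓ s ≤ 0 := by
  set w := z ⊓ s
  refine nonpos_of_forall_nsmul_le (u := v) fun n => ?_
  induction n with
  | zero => simpa using hv
  | succ n ih =>
    set m := v ⊓ (n : ℝ) • s
    have hnw : (n : ℝ) • w ≤ m :=
      le_inf (by rwa [Nat.cast_smul_eq_nsmul])
        (smul_le_smul_of_nonneg_left inf_le_right n.cast_nonneg)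
    have hw : w ≤ v - m := inf_le_left.trans ((hz n).trans_eq
      (eq_sub_of_add_eq' (inf_add_posPart_sub v _)))
    rw [succ_nsmul, ← Nat.cast_smul_eq_nsmul ℝ]
    calc (n : ℝ) • w + w ≤ m + (v - m) := add_le_add hnw hw
      _ = v := add_sub_cancel m v

theorem inf_nonpos_of_forall_posPart_smul_sub_inf_nonpos {b u Y : V} (hu : 0 ≤ u) (hY : 0 ≤ Y)
    (h : ∀ n : ℕ, ((n : ℝ) • b - Y)⁺ ⊓ u ≤ 0) : b ⊓ u ≤ 0 := by
  set c := b ⊓ u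
  refine nonpos_of_forall_nsmul_le (u := Y) fun n => ?_
  rcases n.eq_zero_or_pos with rfl | hn
  · simpa using hY
  have hn' : (0 : ℝ) < n := by exact_mod_cast hn
  set β := ((n : ℝ) • b - Y)⁺
  have hβ : β ≤ (n : ℝ) • β := by
    have h1 : (1 : ℝ) ≤ n := Nat.one_le_cast.mpr hn
    simpa [sub_smul] using smul_nonneg (sub_nonneg.mpr h1) (posPart_nonneg ((n : ℝ) • b - Y))
  rw [← Nat.cast_smul_eq_nsmul ℝ, ← sub_nonpos, ← posPart_nonpos]
  calc ((n : ℝ) • c - Y)⁺ ≤ (n : ℝ) • β ⊓ (n : ℝ) • u := by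
        refine le_inf ((posPart_mono ?_).trans hβ) (sup_le ?_ (smul_nonneg hn'.le hu))
        · exact sub_le_sub_right (smul_le_smul_of_nonneg_left inf_le_left hn'.le) Y
        · exact (sub_le_self _ hY).trans (smul_le_smul_of_nonneg_left inf_le_right hn'.le)
    _ = (n : ℝ) • (β ⊓ u) := ((OrderIso.smulRight hn').map_inf _ _).symm
    _ ≤ 0 := smul_nonpos_of_nonneg_of_nonpos hn'.le (h n)

end ConditionallyCompleteLatticeOrderedGroup

section Operators

variable {V : Type*} [AddCommGroup V] [ConditionallyCompleteLattice V]

theorem orderConvNet_zero_of_abs_le_of_antitone {ι : Type*} [Preorder ι] [IsDirected ι (· ≤ ·)]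
    [Nonempty ι] {y u : ι → V} (hu : Antitone u) (hu0 : IsGLB (Set.range u) 0)
    (hyu : ∀ i, |y i| ≤ u i) : OrderConvNet V y 0 := by
  refine ⟨Set.range u, Set.range_nonempty u, directedOn_range.mpr hu.directed_ge, hu0, ?_⟩
  rintro _ ⟨i₀, rfl⟩
  exact ⟨i₀, fun i hi => by simpa using (hyu i).trans (hu hi)⟩

theorem OrderConvNet.nonpos_of_le_smul_abs [Module ℝ V] [PosSMulMono ℝ V] {ι : Type*}
    [Preorder ι] [IsDirected ι (· ≤ ·)] {y : ι → V} (h : OrderConvNet V y 0) {r : ℝ}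
    (hr : 0 ≤ r) {e : V} {j : ι} (he : ∀ i, j ≤ i → e ≤ r • |y i|) : e ≤ 0 := by
  obtain ⟨D, hDne, -, hD, hev⟩ := h
  refine hD.nonpos_of_forall_le_smul hDne hr fun d hd => ?_
  obtain ⟨i₀, hi₀⟩ := hev d hd
  obtain ⟨i, hji, hi₀i⟩ := directed_of (· ≤ ·) j i₀
  exact (he i hji).trans (smul_le_smul_of_nonneg_left (by simpa using hi₀ i hi₀i) hr)

variable [Module ℝ V] {T : V →ₗ[ℝ] V}

theorem opLE.apply_nonneg (hT : opLE V 0 T) {x : V} (hx : 0 ≤ x) : 0 ≤ T x :=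
  hT x hx

variable [AddLeftMono V]

theorem opLE.monotone (hT : opLE V 0 T) : Monotone T := fun a b h =>
  sub_nonneg.mp <| by simpa only [map_sub] using hT.apply_nonneg (sub_nonneg.mpr h)

theorem IsBandPreserving.apply_inf_eq_zero (hbp : IsBandPreserving V T) (hT : opLE V 0 T)
    {x y : V} (hx : 0 ≤ x) (hy : 0 ≤ y) (h : x ⊓ y = 0) : T x ⊓ y = 0 := by
  have := hbp x y (by rwa [abs_of_nonneg hx, abs_of_nonneg hy])
  rwa [abs_of_nonneg (hT.apply_nonneg hx), abs_of_nonneg hy] at this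

theorem IsBandPreserving.abs_apply (hbp : IsBandPreserving V T) (hT : opLE V 0 T) (s : V) :
    |T s| = T |s| := by
  have hdisj : T s⁻ ⊓ T s⁺ = 0 := hbp.apply_inf_eq_zero hT (negPart_nonneg s)
    (hT.apply_nonneg (posPart_nonneg s)) <| by
      rw [inf_comm]
      exact hbp.apply_inf_eq_zero hT (posPart_nonneg s) (negPart_nonneg s)
        (posPart_inf_negPart_eq_zero s)
  have hsup : T s⁻ ⊔ T s⁺ = T s⁻ + T s⁺ := by
    simpa only [hdisj, zero_add] using inf_add_sup (T s⁻) (T s⁺)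
  rw [← posPart_sub_negPart s, map_sub, ← sup_sub_inf_eq_abs_sub, hdisj, sub_zero, hsup,
    add_comm, ← map_add, posPart_add_negPart, posPart_sub_negPart]

variable [PosSMulMono ℝ V]

theorem IsBandPreserving.posPart_smul_sub_apply_inf_nonpos (hbp : IsBandPreserving V T)
    (hT : opLE V 0 T) {A : Set V} (hA : IsGLB A 0) (hAne : A.Nonempty) {u b : V}
    (hb : ∀ a ∈ A, b ≤ T a) {r : ℝ} (hr : 0 ≤ r) : (r • b - T u)⁺ ⊓ u ≤ 0 := by
  set β := (r • b - T u)⁺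
  refine hA.nonpos_of_forall_le_smul hAne hr fun a ha => ?_
  have hβ : β ≤ T (r • a - u)⁺ := by
    refine sup_le (sub_le_iff_le_add.mpr ?_) (hT.apply_nonneg (posPart_nonneg _))
    calc r • b ≤ T (r • a) := by rw [map_smul]; exact smul_le_smul_of_nonneg_left (hb a ha) hr
      _ = T (r • a ⊓ u) + T (r • a - u)⁺ := by rw [← map_add, inf_add_posPart_sub]
      _ ≤ T u + T (r • a - u)⁺ := add_le_add (hT.monotone inf_le_right) le_rfl
      _ = T (r • a - u)⁺ + T u := add_comm _ _
  have hβw : β ⊓ (r • a - u)⁻ ≤ 0 := (inf_le_inf_right _ hβ).trans_eq <|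
    hbp.apply_inf_eq_zero hT (posPart_nonneg _) (negPart_nonneg _) (posPart_inf_negPart_eq_zero _)
  refine le_of_le_add_of_inf_nonpos ((inf_le_inf_right _ inf_le_left).trans hβw)
    (smul_nonneg hr (hA.1 ha)) ?_
  calc β ⊓ u ≤ u := inf_le_right
    _ ≤ (r • a - u)⁻ + r • a := sub_le_iff_le_add.mp (by simpa using neg_le_negPart (r • a - u))

theorem IsBandPreserving.nonpos_of_forall_le_apply (hbp : IsBandPreserving V T) (hT : opLE V 0 T)
    {A : Set V} (hA : IsGLB A 0) {u b : V} (hAu : ∀ a ∈ A, a ≤ u) (hb : ∀ a ∈ A, b ≤ T a) :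
    b ≤ 0 := by
  rcases A.eq_empty_or_nonempty with rfl | ⟨a₀, ha₀⟩
  · exact hA.2 (by simp)
  have hu : 0 ≤ u := (hA.1 ha₀).trans (hAu a₀ ha₀)
  have hb' : ∀ a ∈ A, b⁺ ≤ T a := fun a ha => sup_le (hb a ha) (hT.apply_nonneg (hA.1 ha))
  have hbu : b⁺ ⊓ u = 0 := le_antisymm
    (inf_nonpos_of_forall_posPart_smul_sub_inf_nonpos hu (hT.apply_nonneg hu) fun n =>
      hbp.posPart_smul_sub_apply_inf_nonpos hT hA ⟨a₀, ha₀⟩ hb' n.cast_nonneg)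
    (le_inf (posPart_nonneg b) hu)
  calc b ≤ b⁺ := le_posPart b
    _ = T u ⊓ b⁺ := (inf_eq_right.mpr ((hb' a₀ ha₀).trans (hT.monotone (hAu a₀ ha₀)))).symm
    _ = 0 := hbp.apply_inf_eq_zero hT hu (posPart_nonneg b) (by rwa [inf_comm])

theorem IsBandPreserving.le_apply_of_isGLB (hbp : IsBandPreserving V T) (hT : opLE V 0 T)
    {A : Set V} {z u b : V} (hA : IsGLB A z) (hAu : ∀ a ∈ A, a ≤ u)
    (hb : ∀ a ∈ A, b ≤ T a) : b ≤ T z := by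
  refine sub_nonpos.mp <| hbp.nonpos_of_forall_le_apply hT (A := OrderIso.subRight z '' A)
    (u := u - z) ?_ ?_ ?_
  · simpa using (OrderIso.subRight z).isGLB_image'.mpr hA
  · rintro _ ⟨a, ha, rfl⟩
    exact sub_le_sub_right (hAu a ha) z
  · rintro _ ⟨a, ha, rfl⟩
    simpa using sub_le_sub_right (hb a ha) (T z)

section Nets

variable {ι : Type*} [Preorder ι] [IsDirected ι (· ≤ ·)] {T : ι → V →ₗ[ℝ] V}

theorem le_apply_posPart_sub_smul_abs (hbp : ∀ i, IsBandPreserving V (T i))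
    (hpos : ∀ i, opLE V 0 (T i)) (hdec : ∀ i j : ι, i ≤ j → opLE V (T j) (T i)) {s : V}
    (hs : OrderConvNet V (fun i => T i s) 0) {v b : V} (hb : ∀ i, b ≤ T i v) (n : ℕ) (j : ι) :
    b ≤ T j (v - (n : ℝ) • |s|)⁺ := by
  refine sub_nonpos.mp (hs.nonpos_of_le_smul_abs n.cast_nonneg (j := j) fun i hji => ?_)
  rw [sub_le_iff_le_add, (hbp i).abs_apply (hpos i), ← map_smul]
  calc b ≤ T i v := hb i
    _ = T i (v ⊓ (n : ℝ) • |s|) + T i (v - (n : ℝ) • |s|)⁺ := by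
      rw [← map_add, inf_add_posPart_sub]
    _ ≤ T i ((n : ℝ) • |s|) + T j (v - (n : ℝ) • |s|)⁺ :=
      add_le_add ((hpos i).monotone inf_le_right) (hdec j i hji _ (posPart_nonneg _))

theorem inf_abs_nonpos_of_forall_le_apply [Nonempty ι] (hbp : ∀ i, IsBandPreserving V (T i))
    (hpos : ∀ i, opLE V 0 (T i)) (hdec : ∀ i j : ι, i ≤ j → opLE V (T j) (T i)) {s : V}
    (hs : OrderConvNet V (fun i => T i s) 0) {v b : V} (hv : 0 ≤ v) (hb : ∀ i, b ≤ T i v) :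
    b ⊓ |s| ≤ 0 := by
  set x : ℕ → V := fun n => (v - (n : ℝ) • |s|)⁺
  have hbdd : BddBelow (Set.range x) := ⟨0, Set.forall_mem_range.2 fun n => posPart_nonneg _⟩
  set z := ⨅ n, x n
  have hz0 : 0 ≤ z := le_ciInf fun n => posPart_nonneg _
  have hzs : z ⊓ |s| = 0 := le_antisymm
    (inf_nonpos_of_forall_le_posPart_sub_smul hv (ciInf_le hbdd))
    (le_inf hz0 (abs_nonneg s))
  obtain ⟨j⟩ := ‹Nonempty ι›
  have hbz : b ≤ T j z := (hbp j).le_apply_of_isGLB (hpos j) (isGLB_ciInf hbdd) (u := v)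
    (Set.forall_mem_range.2 fun n => sup_le (sub_le_self v (smul_nonneg n.cast_nonneg
      (abs_nonneg s))) hv)
    (Set.forall_mem_range.2 fun n => le_apply_posPart_sub_smul_abs hbp hpos hdec hs hb n j)
  calc b ⊓ |s| ≤ T j z ⊓ |s| := inf_le_inf_right _ hbz
    _ = 0 := (hbp j).apply_inf_eq_zero (hpos j) hz0 (abs_nonneg s) hzs

theorem isGLB_range_apply_abs_of_memBandGen [Nonempty ι]
    (hbp : ∀ i, IsBandPreserving V (T i)) (hpos : ∀ i, opLE V 0 (T i))
    (hdec : ∀ i j : ι, i ≤ j → opLE V (T j) (T i)) {S : Set V}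
    (hS : ∀ s ∈ S, OrderConvNet V (fun i => T i s) 0) {x : V} (hx : memBandGen V S x) :
    IsGLB (Set.range fun i => T i |x|) 0 := by
  refine ⟨Set.forall_mem_range.2 fun i => (hpos i).apply_nonneg (abs_nonneg x), fun c hc => ?_⟩
  have hb : ∀ i, c⁺ ≤ T i |x| := fun i =>
    sup_le (hc ⟨i, rfl⟩) ((hpos i).apply_nonneg (abs_nonneg x))
  have hbS : ∀ s ∈ S, |c⁺| ⊓ |s| = 0 := fun s hs => by
    rw [abs_of_nonneg (posPart_nonneg c)]
    exact le_antisymm (inf_abs_nonpos_of_forall_le_apply hbp hpos hdec (hS s hs) (abs_nonneg x) hb)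
      (le_inf (posPart_nonneg c) (abs_nonneg s))
  have hbx : |x| ⊓ c⁺ = 0 := by
    simpa [abs_of_nonneg (posPart_nonneg c), inf_comm] using hx c⁺ hbS
  obtain ⟨j⟩ := ‹Nonempty ι›
  calc c ≤ c⁺ := le_posPart c
    _ = T j |x| ⊓ c⁺ := (inf_eq_right.mpr (hb j)).symm
    _ = 0 := (hbp j).apply_inf_eq_zero (hpos j) (abs_nonneg x) (posPart_nonneg c) hbx

end Nets

end Operators

theorem stmt14
    {ι : Type*} [Preorder ι] [IsDirected ι (· ≤ ·)] [Nonempty ι]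
    (T : ι → E →ₗ[ℝ] E)
    (horth : ∀ i, IsOrthomorphism E (T i))
    (hdec : ∀ i j : ι, i ≤ j → opLE E (T j) (T i))
    (hpos : ∀ i, opLE E 0 (T i))
    (S : Set E)
    (hS : ∀ s ∈ S, OrderConvNet E (fun i => T i s) 0) :
    ∀ x : E, memBandGen E S x → OrderConvNet E (fun i => T i x) 0 := by
  intro x hx
  have hbp : ∀ i, IsBandPreserving E (T i) := fun i => (horth i).2
  exact orderConvNet_zero_of_abs_le_of_antitone (fun i j hij => hdec i j hij _ (abs_nonneg x))
    (isGLB_range_apply_abs_of_memBandGen hbp hpos hdec hS hx)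
    fun i => ((hbp i).abs_apply (hpos i) x).le
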